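/- arXiv:2305.06523 — 2 statements merged into one kernel-verified Lean document; each statement's English description precedes it below -/
import Mathlib

section
/- Let w : ℝ² → ℝ be a bounded differentiable function whose gradient is bounded, with ‖w‖∞ = sup_{z∈ℝ²} |w(z)| and ‖∇w‖∞ = sup_{z∈ℝ²} ‖∇w(z)‖₂. Let I be a finite index set and, for each i ∈ I, let u_i = (a_i, b_i) and v_i = (c_i, d_i) be points of ℝ² with a_i ≤ b_i and c_i ≤ d_i, and set L = max_{i∈I} max{b_i − a_i, d_i − c_i}. Let β₁(t) = Σ_{i∈I} w(u_i)·χ_{[a_i,b_i)}(t) and β₂(t) = Σ_{i∈I} w(v_i)·χ_{[c_i,d_i)}(t). Fix an equally spaced grid t₁ < t₂ < ⋯ < t_d with Δt = t_{k+1} − t_k constant, and define the vectors of averaged Bettis 𝛃₁, 𝛃₂ ∈ ℝ^{d−1} with k-th components (1/Δt)∫_{t_k}^{t_{k+1}} β₁(t) dt and (1/Δt)∫_{t_k}^{t_{k+1}} β₂(t) dt respectively. Then ‖𝛃₁ − 𝛃₂‖₁ ≤ (1/Δt)·(‖w‖∞ + L·‖∇w‖∞) · Σ_{i∈I} ‖u_i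 − v_i‖₁. -/
/-!
On each grid cell the difference of the averaged Bettis is `1/Δt` times the integral of
`β₁ - β₂`; since the cells are disjoint, the ℓ¹ norm of the VAB difference is at most
`(1/Δt)·∫ |β₁ - β₂|`, and by the triangle inequality at most `1/Δt` times the sum over `i` of
`∫ |w(uᵢ)·1_{[aᵢ,bᵢ)} - w(vᵢ)·1_{[cᵢ,dᵢ)}|`. Writing `x·1_A - y·1_B = (x - y)·1_A + y·(1_A - 1_B)`
bounds each term by `|w(uᵢ) - w(vᵢ)|·(bᵢ - aᵢ) + |w(vᵢ)|·|A ∆ B|`. The mean value theorem gives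
`|w(uᵢ) - w(vᵢ)| ≤ ‖∇w‖∞·‖uᵢ - vᵢ‖₂ ≤ ‖∇w‖∞·‖uᵢ - vᵢ‖₁`, and `[a, b) ∆ [c, d)` has length at
most `|a - c| + |b - d|`.
-/

open MeasureTheory

noncomputable def chiIco (a b t : ℝ) : ℝ :=
  Set.indicator (Set.Ico a b) (fun _ => (1 : ℝ)) t

noncomputable def pt (a b : ℝ) : EuclideanSpace ℝ (Fin 2) :=
  (WithLp.equiv 2 (Fin 2 → ℝ)).symm ![a, b]

open Finset
open scoped symmDiff

lemma EuclideanSpace.norm_le_sum_norm {𝕜 ι : Type*} [RCLike 𝕜] [Fintype ι]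
    (x : EuclideanSpace 𝕜 ι) : ‖x‖ ≤ ∑ i, ‖x i‖ := by
  rw [EuclideanSpace.norm_eq, Real.sqrt_le_iff]
  exact ⟨by positivity, sum_sq_le_sq_sum_of_nonneg fun _ _ => norm_nonneg _⟩

lemma norm_pt_sub_pt_le (a b c d : ℝ) : ‖pt a b - pt c d‖ ≤ |a - c| + |b - d| := by
  simpa [pt, Fin.sum_univ_two, Real.norm_eq_abs] using
    EuclideanSpace.norm_le_sum_norm (pt a b - pt c d)

lemma abs_sub_le_of_norm_gradient_le {F : Type*} [NormedAddCommGroup F] [InnerProductSpace ℝ F]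
    [CompleteSpace F] {f : F → ℝ} {C : ℝ} (hf : Differentiable ℝ f)
    (hC : ∀ z, ‖gradient f z‖ ≤ C) (x y : F) : |f x - f y| ≤ C * ‖x - y‖ := by
  have hfderiv : ∀ z ∈ Set.univ, ‖fderiv ℝ f z‖ ≤ C := fun z _ => by
    simpa only [gradient, LinearIsometryEquiv.norm_map] using hC z
  simpa only [Real.norm_eq_abs] using convex_univ.norm_image_sub_le_of_norm_fderiv_le
    (fun z _ => hf z) hfderiv (Set.mem_univ y) (Set.mem_univ x)

lemma Ico_symmDiff_Ico_subset (a b c d : ℝ) :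
    Set.Ico a b ∆ Set.Ico c d
      ⊆ Set.Ico (min a c) (max a c) ∪ Set.Ico (min b d) (max b d) := by
  intro t ht
  simp only [Set.mem_symmDiff, Set.mem_Ico, Set.mem_union, min_le_iff, lt_max_iff] at ht ⊢
  by_contra! h
  rcases ht with ⟨⟨hat, htb⟩, hct⟩ | ⟨⟨hct, htd⟩, hat⟩ <;> grind

lemma volume_real_Ico_symmDiff_Ico_le (a b c d : ℝ) :
    volume.real (Set.Ico a b ∆ Set.Ico c d) ≤ |a - c| + |b - d| := by
  calc volume.real (Set.Ico a b ∆ Set.Ico c d)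
      ≤ volume.real (Set.Ico (min a c) (max a c) ∪ Set.Ico (min b d) (max b d)) :=
        measureReal_mono (Ico_symmDiff_Ico_subset a b c d)
          (measure_union_lt_top measure_Ico_lt_top measure_Ico_lt_top).ne
    _ ≤ volume.real (Set.Ico (min a c) (max a c)) + volume.real (Set.Ico (min b d) (max b d)) :=
        measureReal_union_le _ _
    _ = |a - c| + |b - d| := by
        rw [Real.volume_real_Ico_of_le min_le_max, Real.volume_real_Ico_of_le min_le_max,
          max_sub_min_eq_abs, max_sub_min_eq_abs, abs_sub_comm c a, abs_sub_comm d b]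

lemma integral_abs_indicator_const_sub_indicator_const_le {α : Type*} [MeasurableSpace α]
    {μ : Measure α} {s t : Set α} (hs : MeasurableSet s) (ht : MeasurableSet t)
    (hμs : μ s ≠ ⊤) (hμt : μ t ≠ ⊤) (x y : ℝ) :
    ∫ z, |s.indicator (fun _ => x) z - t.indicator (fun _ => y) z| ∂μ
      ≤ |x - y| * μ.real s + |y| * μ.real (s ∆ t) := by
  have hμst : μ (s ∆ t) ≠ ⊤ := measure_symmDiff_ne_top hμs hμt
  have hst : MeasurableSet (s ∆ t) := hs.symmDiff ht
  have hpoint : ∀ z, |s.indicator (fun _ => x) z - t.indicator (fun _ => y) z|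
      ≤ s.indicator (fun _ => |x - y|) z + (s ∆ t).indicator (fun _ => |y|) z := by
    intro z
    have hsplit : s.indicator (fun _ => x) z - t.indicator (fun _ => y) z
        = s.indicator (fun _ => x - y) z
          + (s.indicator (fun _ => y) z - t.indicator (fun _ => y) z) := by
      by_cases hz : z ∈ s <;> simp [hz]
    rw [hsplit]
    refine (abs_add_le _ _).trans (le_of_eq ?_)
    rw [← Set.abs_indicator_symmDiff]
    by_cases hz : z ∈ s <;> by_cases hz' : z ∈ s ∆ t <;> simp [hz, hz']
  have hint : ∀ {u : Set α} (c : ℝ), MeasurableSet u → μ u ≠ ⊤ →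
      Integrable (u.indicator fun _ => c) μ :=
    fun c hu hμu => (integrableOn_const hμu).integrable_indicator hu
  calc ∫ z, |s.indicator (fun _ => x) z - t.indicator (fun _ => y) z| ∂μ
      ≤ ∫ z, (s.indicator (fun _ => |x - y|) z + (s ∆ t).indicator (fun _ => |y|) z) ∂μ :=
        integral_mono (((hint x hs hμs).sub (hint y ht hμt)).abs)
          ((hint _ hs hμs).add (hint _ hst hμst)) hpoint
    _ = |x - y| * μ.real s + |y| * μ.real (s ∆ t) := by
        rw [integral_add (hint _ hs hμs) (hint _ hst hμst), integral_indicator_const _ hs,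
          integral_indicator_const _ hst, smul_eq_mul, smul_eq_mul, mul_comm, mul_comm (μ.real _)]

lemma mul_chiIco (x a b t : ℝ) :
    x * chiIco a b t = (Set.Ico a b).indicator (fun _ => x) t := by
  by_cases ht : t ∈ Set.Ico a b <;> simp [chiIco, ht]

lemma integrable_mul_chiIco (x a b : ℝ) : Integrable (fun t => x * chiIco a b t) := by
  simp only [mul_chiIco]
  exact (integrableOn_const measure_Ico_lt_top.ne).integrable_indicator measurableSet_Ico

lemma integral_abs_mul_chiIco_sub_mul_chiIco_le {w : EuclideanSpace ℝ (Fin 2) → ℝ} {W Wg L : ℝ}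
    (hdiff : Differentiable ℝ w) (hW : ∀ z, |w z| ≤ W) (hWg : ∀ z, ‖gradient w z‖ ≤ Wg)
    {a b : ℝ} (hab : a ≤ b) (hL : b - a ≤ L) (c d : ℝ) :
    ∫ t, |w (pt a b) * chiIco a b t - w (pt c d) * chiIco c d t|
      ≤ (W + L * Wg) * (|a - c| + |b - d|) := by
  have hWg0 : 0 ≤ Wg := (norm_nonneg _).trans (hWg 0)
  have hlip : |w (pt a b) - w (pt c d)| ≤ Wg * (|a - c| + |b - d|) :=
    (abs_sub_le_of_norm_gradient_le hdiff hWg _ _).trans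
      (mul_le_mul_of_nonneg_left (norm_pt_sub_pt_le a b c d) hWg0)
  simp only [mul_chiIco]
  calc ∫ t, |(Set.Ico a b).indicator (fun _ => w (pt a b)) t
          - (Set.Ico c d).indicator (fun _ => w (pt c d)) t|
      ≤ |w (pt a b) - w (pt c d)| * volume.real (Set.Ico a b)
          + |w (pt c d)| * volume.real (Set.Ico a b ∆ Set.Ico c d) :=
        integral_abs_indicator_const_sub_indicator_const_le measurableSet_Ico measurableSet_Ico
          measure_Ico_lt_top.ne measure_Ico_lt_top.ne _ _
    _ ≤ Wg * (|a - c| + |b - d|) * L + W * (|a - c| + |b - d|) := by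
        rw [Real.volume_real_Ico_of_le hab]
        gcongr
        · exact (abs_nonneg _).trans (hW 0)
        · exact hW _
        · exact volume_real_Ico_symmDiff_Ico_le a b c d
    _ = (W + L * Wg) * (|a - c| + |b - d|) := by ring

lemma sum_abs_intervalIntegral_le_integral_abs {f : ℝ → ℝ} (hf : Integrable f) {T : ℕ → ℝ}
    (hT : Monotone T) (m : ℕ) :
    ∑ k ∈ range m, |∫ t in T k..T (k + 1), f t| ≤ ∫ t, |f t| := by
  calc ∑ k ∈ range m, |∫ t in T k..T (k + 1), f t|
      ≤ ∑ k ∈ range m, ∫ t in T k..T (k + 1), |f t| :=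
        sum_le_sum fun k _ => intervalIntegral.abs_integral_le_integral_abs (hT k.le_succ)
    _ = ∫ t in Set.Ioc (T 0) (T m), |f t| := by
        rw [intervalIntegral.sum_integral_adjacent_intervals fun k _ => hf.abs.intervalIntegrable,
          intervalIntegral.integral_of_le (hT (Nat.zero_le m))]
    _ ≤ ∫ t, |f t| := setIntegral_le_integral hf.abs (ae_of_all _ fun t => abs_nonneg (f t))

lemma integral_abs_sum_sub_sum_le {α ι : Type*} [MeasurableSpace α] {μ : Measure α}
    (s : Finset ι) {f g : ι → α → ℝ} (hf : ∀ i ∈ s, Integrable (f i) μ)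
    (hg : ∀ i ∈ s, Integrable (g i) μ) :
    ∫ x, |∑ i ∈ s, f i x - ∑ i ∈ s, g i x| ∂μ ≤ ∑ i ∈ s, ∫ x, |f i x - g i x| ∂μ := by
  have hfg : ∀ i ∈ s, Integrable (fun x => |f i x - g i x|) μ :=
    fun i hi => ((hf i hi).sub (hg i hi)).abs
  rw [← integral_finsetSum s hfg]
  refine integral_mono ((integrable_finsetSum s hf).sub (integrable_finsetSum s hg)).abs
    (integrable_finsetSum s hfg) fun x => ?_
  simpa only [sum_sub_distrib] using abs_sum_le_sum_abs (fun i => f i x - g i x) s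

theorem vab_stability_general
    (w : EuclideanSpace ℝ (Fin 2) → ℝ) (W Wg : ℝ)
    (hdiff : Differentiable ℝ w)
    (hW : ∀ z, |w z| ≤ W)
    (hWg : ∀ z, ‖gradient w z‖ ≤ Wg)
    (ι : Type*) [Fintype ι]
    (a b c d : ι → ℝ)
    (hab : ∀ i, a i ≤ b i)
    (L : ℝ) (hL : ∀ i, max (b i - a i) (d i - c i) ≤ L)
    (n : ℕ) (T : ℕ → ℝ) (Δt : ℝ) (hΔt : 0 < Δt)
    (hT : ∀ k, T (k + 1) = T k + Δt) :
    ∑ k ∈ Finset.range (n - 1),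
        |(1 / Δt) * (∫ t in T k..T (k + 1),
            ∑ i, w (pt (a i) (b i)) * chiIco (a i) (b i) t)
          - (1 / Δt) * ∫ t in T k..T (k + 1),
            ∑ i, w (pt (c i) (d i)) * chiIco (c i) (d i) t|
      ≤ (1 / Δt) * ((W + L * Wg) * ∑ i, (|a i - c i| + |b i - d i|)) := by
  set β₁ := fun t => ∑ i, w (pt (a i) (b i)) * chiIco (a i) (b i) t
  set β₂ := fun t => ∑ i, w (pt (c i) (d i)) * chiIco (c i) (d i) t
  have hβ₁ : Integrable β₁ := integrable_finsetSum _ fun i _ => integrable_mul_chiIco _ _ _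
  have hβ₂ : Integrable β₂ := integrable_finsetSum _ fun i _ => integrable_mul_chiIco _ _ _
  have hT_mono : Monotone T := monotone_nat_of_le_succ fun k => by rw [hT k]; linarith
  have hcomponent : ∀ k, |(1 / Δt) * (∫ t in T k..T (k + 1), β₁ t)
      - (1 / Δt) * ∫ t in T k..T (k + 1), β₂ t|
      = (1 / Δt) * |∫ t in T k..T (k + 1), β₁ t - β₂ t| := fun k => by
    rw [← mul_sub, abs_mul, abs_of_pos (one_div_pos.2 hΔt),
      intervalIntegral.integral_sub hβ₁.intervalIntegrable hβ₂.intervalIntegrable]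
  simp only [hcomponent, ← mul_sum]
  gcongr
  calc ∑ k ∈ range (n - 1), |∫ t in T k..T (k + 1), β₁ t - β₂ t|
      ≤ ∫ t, |β₁ t - β₂ t| := sum_abs_intervalIntegral_le_integral_abs (hβ₁.sub hβ₂) hT_mono _
    _ ≤ ∑ i, ∫ t, |w (pt (a i) (b i)) * chiIco (a i) (b i) t
          - w (pt (c i) (d i)) * chiIco (c i) (d i) t| :=
        integral_abs_sum_sub_sum_le _ (fun i _ => integrable_mul_chiIco _ _ _)
          (fun i _ => integrable_mul_chiIco _ _ _)
    _ ≤ (W + L * Wg) * ∑ i, (|a i - c i| + |b i - d i|) := by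
        rw [mul_sum]
        exact sum_le_sum fun i _ => integral_abs_mul_chiIco_sub_mul_chiIco_le hdiff hW hWg (hab i)
          ((le_max_left _ _).trans (hL i)) (c i) (d i)

/-- **Stability of the vector of averaged Bettis (Corollary 1).** Let `w : ℝ² → ℝ` be a
bounded differentiable function with bounded gradient (`W` bounds `|w|`, `Wg` bounds the
Euclidean norm of `∇w`). Given a matching `i ↦ ((aᵢ, bᵢ), (cᵢ, dᵢ))` between two
persistence diagrams with `aᵢ ≤ bᵢ`, `cᵢ ≤ dᵢ` and `L ≥ max (bᵢ - aᵢ) (dᵢ - cᵢ)` for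
all `i`, form the Betti functions `β₁(t) = Σᵢ w(aᵢ,bᵢ)·χ_{[aᵢ,bᵢ)}(t)`,
`β₂(t) = Σᵢ w(cᵢ,dᵢ)·χ_{[cᵢ,dᵢ)}(t)`. For an equally spaced grid `T 0 < T 1 < ⋯ < T (n-1)`
with spacing `Δt > 0`, the vectors of averaged Bettis, with `k`-th components
`(1/Δt)·∫_{T k}^{T (k+1)} βⱼ(t) dt` for `k = 0, …, n-2`, satisfy
`‖𝛃₁ − 𝛃₂‖₁ ≤ (1/Δt)·(W + L·Wg)·Σᵢ (|aᵢ − cᵢ| + |bᵢ − dᵢ|)`. -/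
theorem vab_stability
    (w : EuclideanSpace ℝ (Fin 2) → ℝ) (W Wg : ℝ)
    (hdiff : Differentiable ℝ w)
    (hW : ∀ z, |w z| ≤ W)
    (hWg : ∀ z, ‖gradient w z‖ ≤ Wg)
    (ι : Type*) [Fintype ι]
    (a b c d : ι → ℝ)
    (hab : ∀ i, a i ≤ b i) (hcd : ∀ i, c i ≤ d i)
    (L : ℝ) (hL : ∀ i, max (b i - a i) (d i - c i) ≤ L)
    (n : ℕ) (hn : 2 ≤ n) (T : ℕ → ℝ) (Δt : ℝ) (hΔt : 0 < Δt)
    (hT : ∀ k, T (k + 1) = T k + Δt) :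
    ∑ k ∈ Finset.range (n - 1),
        |(1 / Δt) * (∫ t in T k..T (k + 1),
            ∑ i, w (pt (a i) (b i)) * chiIco (a i) (b i) t)
          - (1 / Δt) * ∫ t in T k..T (k + 1),
            ∑ i, w (pt (c i) (d i)) * chiIco (c i) (d i) t|
      ≤ (1 / Δt) * ((W + L * Wg) * ∑ i, (|a i - c i| + |b i - d i|)) :=
  vab_stability_general w W Wg hdiff hW hWg ι a b c d hab L hL n T Δt hΔt hT
end

section
/- Let I be a finite index set and, for each i ∈ I, let u_i = (a_i, b_i) and v_i = (c_i, d_i) be points of ℝ² with a_i ≤ b_i and c_i ≤ d_i. Let β₁(t) = Σ_{i∈I} χ_{[a_i,b_i)}(t) and β₂(t) = Σ_{i∈I} χ_{[c_i,d_i)}(t) be the corresponding unweighted Betti functions. Fix an equally spaced grid t₁ < t₂ < ⋯ < t_d with Δt = t_{k+1} − t_k constant, and let 𝛃₁, 𝛃₂ ∈ ℝ^{d−1} be the vectors of averaged Bettis with k-th components (1/Δt)∫_{t_k}^{t_{k+1}} β₁(t) dt and (1/Δt)∫_{t_k}^{t_{k+1}} β₂(t) dt. Then ‖𝛃₁ −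 𝛃₂‖₁ ≤ (1/Δt) · Σ_{i∈I} (|a_i − c_i| + |b_i − d_i|). -/
/-!
The difference of two averaged Bettis on a grid cell is the average of `β₁ - β₂` over that
cell, so the ℓ¹ norm of the difference is at most `1/Δt` times `∫ |β₁ - β₂|` over the union of
the cells, hence over all of `ℝ`. Pointwise, `|χ_[a,b) - χ_[c,d)|` is dominated by the
indicators of the intervals between `a, c` and between `b, d`, whose lengths are `|a - c|` and
`|b - d|`; summing over the matching gives the transport cost.
-/

open MeasureTheory

theorem abs_chiIco_sub_chiIco_le (a b c d t : ℝ) :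
    |chiIco a b t - chiIco c d t| ≤
      chiIco (min a c) (max a c) t + chiIco (min b d) (max b d) t := by
  simp only [chiIco, Set.indicator_apply, Set.mem_Ico, lt_max_iff, min_le_iff]
  split_ifs <;> norm_num <;> grind

theorem integrable_chiIco (a b : ℝ) : Integrable (chiIco a b) :=
  (integrable_indicator_iff measurableSet_Ico).2 (integrableOn_const measure_Ico_lt_top.ne)

theorem integral_chiIco_min_max (a c : ℝ) : ∫ t, chiIco (min a c) (max a c) t = |a - c| := by
  simp [chiIco, integral_indicator_const _ measurableSet_Ico, max_sub_min_eq_abs, abs_sub_comm]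

theorem integral_abs_chiIco_sub_chiIco_le (a b c d : ℝ) :
    ∫ t, |chiIco a b t - chiIco c d t| ≤ |a - c| + |b - d| := by
  rw [← integral_chiIco_min_max, ← integral_chiIco_min_max,
    ← integral_add (integrable_chiIco _ _) (integrable_chiIco _ _)]
  exact integral_mono ((integrable_chiIco _ _).sub (integrable_chiIco _ _)).abs
    ((integrable_chiIco _ _).add (integrable_chiIco _ _)) (abs_chiIco_sub_chiIco_le a b c d)

theorem integral_abs_sum_chiIco_sub_sum_chiIco_le {ι : Type*} [Fintype ι] (a b c d : ι → ℝ) :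
    ∫ t, |∑ i, chiIco (a i) (b i) t - ∑ i, chiIco (c i) (d i) t|
      ≤ ∑ i, (|a i - c i| + |b i - d i|) := by
  have hdiff : ∀ i, Integrable fun t => |chiIco (a i) (b i) t - chiIco (c i) (d i) t| :=
    fun i => ((integrable_chiIco _ _).sub (integrable_chiIco _ _)).abs
  calc ∫ t, |∑ i, chiIco (a i) (b i) t - ∑ i, chiIco (c i) (d i) t|
      ≤ ∫ t, ∑ i, |chiIco (a i) (b i) t - chiIco (c i) (d i) t| := by
        refine integral_mono ?_ (integrable_finsetSum _ fun i _ => hdiff i) fun t => ?_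
        · exact ((integrable_finsetSum _ fun i _ => integrable_chiIco _ _).sub
            (integrable_finsetSum _ fun i _ => integrable_chiIco _ _)).abs
        · rw [← Finset.sum_sub_distrib]
          exact Finset.abs_sum_le_sum_abs _ _
    _ = ∑ i, ∫ t, |chiIco (a i) (b i) t - chiIco (c i) (d i) t| :=
        integral_finsetSum _ fun i _ => hdiff i
    _ ≤ ∑ i, (|a i - c i| + |b i - d i|) :=
        Finset.sum_le_sum fun i _ => integral_abs_chiIco_sub_chiIco_le _ _ _ _

theorem sum_norm_intervalIntegral_le_integral_norm {E : Type*} [NormedAddCommGroup E]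
    [NormedSpace ℝ E] {f : ℝ → E} (hf : Integrable f) {T : ℕ → ℝ} (hT : Monotone T) (m : ℕ) :
    ∑ k ∈ Finset.range m, ‖∫ t in T k..T (k + 1), f t‖ ≤ ∫ t, ‖f t‖ := by
  calc ∑ k ∈ Finset.range m, ‖∫ t in T k..T (k + 1), f t‖
      ≤ ∑ k ∈ Finset.range m, ∫ t in T k..T (k + 1), ‖f t‖ :=
        Finset.sum_le_sum fun k _ => intervalIntegral.norm_integral_le_integral_norm (hT k.le_succ)
    _ = ∫ t in T 0..T m, ‖f t‖ :=
        intervalIntegral.sum_integral_adjacent_intervals fun k _ => hf.norm.intervalIntegrable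
    _ ≤ ∫ t, ‖f t‖ := by
        rw [intervalIntegral.integral_of_le (hT (Nat.zero_le m))]
        exact setIntegral_le_integral hf.norm (.of_forall fun t => norm_nonneg _)

theorem vab_stability_unweighted_general
    (ι : Type*) [Fintype ι]
    (a b c d : ι → ℝ)
    (n : ℕ) (T : ℕ → ℝ) (Δt : ℝ) (hΔt : 0 < Δt)
    (hT : ∀ k, T (k + 1) = T k + Δt) :
    ∑ k ∈ Finset.range (n - 1),
        |(1 / Δt) * (∫ t in T k..T (k + 1), ∑ i, chiIco (a i) (b i) t)
          - (1 / Δt) * ∫ t in T k..T (k + 1), ∑ i, chiIco (c i) (d i) t|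
      ≤ (1 / Δt) * ∑ i, (|a i - c i| + |b i - d i|) := by
  have hβ : ∀ (x y : ι → ℝ), Integrable fun t => ∑ i, chiIco (x i) (y i) t :=
    fun x y => integrable_finsetSum _ fun i _ => integrable_chiIco _ _
  have hmono : Monotone T := monotone_nat_of_le_succ fun k => by rw [hT]; linarith
  simp_rw [← mul_sub, abs_mul, abs_of_pos (one_div_pos.2 hΔt), ← Finset.mul_sum,
    ← intervalIntegral.integral_sub (hβ a b).intervalIntegrable (hβ c d).intervalIntegrable]
  gcongr
  exact (sum_norm_intervalIntegral_le_integral_norm ((hβ a b).sub (hβ c d)) hmono _).trans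
    (integral_abs_sum_chiIco_sub_sum_chiIco_le a b c d)

/-- **Stability of the vector of averaged Bettis, unweighted case (Corollary 1 with
`w ≡ 1`).** Given a matching `i ↦ ((aᵢ, bᵢ), (cᵢ, dᵢ))` between two persistence
diagrams with `aᵢ ≤ bᵢ` and `cᵢ ≤ dᵢ`, form the unweighted Betti functions
`β₁(t) = Σᵢ χ_{[aᵢ,bᵢ)}(t)` and `β₂(t) = Σᵢ χ_{[cᵢ,dᵢ)}(t)`. For an equally spaced
grid `T 0 < T 1 < ⋯ < T (n-1)` with spacing `Δt > 0`, the vectors of averaged Bettis,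
with `k`-th components `(1/Δt)·∫_{T k}^{T (k+1)} βⱼ(t) dt` for `k = 0, …, n-2`, satisfy
`‖𝛃₁ − 𝛃₂‖₁ ≤ (1/Δt)·Σᵢ (|aᵢ − cᵢ| + |bᵢ − dᵢ|)`. -/
theorem vab_stability_unweighted
    (ι : Type*) [Fintype ι]
    (a b c d : ι → ℝ)
    (hab : ∀ i, a i ≤ b i) (hcd : ∀ i, c i ≤ d i)
    (n : ℕ) (hn : 2 ≤ n) (T : ℕ → ℝ) (Δt : ℝ) (hΔt : 0 < Δt)
    (hT : ∀ k, T (k + 1) = T k + Δt) :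
    ∑ k ∈ Finset.range (n - 1),
        |(1 / Δt) * (∫ t in T k..T (k + 1), ∑ i, chiIco (a i) (b i) t)
          - (1 / Δt) * ∫ t in T k..T (k + 1), ∑ i, chiIco (c i) (d i) t|
      ≤ (1 / Δt) * ∑ i, (|a i - c i| + |b i - d i|) :=
  vab_stability_unweighted_general ι a b c d n T Δt hΔt hT
end
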